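/- arXiv:2410.21733 — 4 statements merged into one kernel-verified Lean document; each statement's English description precedes it below -/
import Mathlib

section
/- For all integers n ≥ 70 and r with 3 ≤ r ≤ ⌊(n-1)/2⌋ - 2, we have (n/r) · C(⌊(n-1)/2⌋, r-1) > n²/4, where C denotes the binomial coefficient. -/
lemma choose_mono_half {m a b : ℕ} (hab : a ≤ b) (hb : b ≤ m / 2) :
    m.choose a ≤ m.choose b := by
  induction b with
  | zero => simp_all
  | succ k ih =>
    rcases Nat.eq_or_lt_of_le hab with h | h
    · exact h ▸ le_refl _
    · exact le_trans (ih (Nat.lt_succ_iff.mp h) (le_trans (Nat.le_succ k) hb))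
        (Nat.choose_le_succ_of_lt_half_left (Nat.lt_of_succ_le hb))

lemma choose_ge_choose_two {m k : ℕ} (h2 : 2 ≤ k) (hk : k ≤ m - 2) :
    m.choose 2 ≤ m.choose k := by
  rcases le_or_gt k (m / 2) with h | h
  · exact choose_mono_half h2 h
  · have hkm : k ≤ m := le_trans hk (Nat.sub_le m 2)
    rw [← Nat.choose_symm hkm]
    exact choose_mono_half (by omega) (by omega)

theorem stmt_2 (n r : ℕ) (hn : 70 ≤ n) (hr3 : 3 ≤ r) (hr : r ≤ (n - 1) / 2 - 2) :
    (n : ℚ) / r * (((n - 1) / 2).choose (r - 1)) > (n : ℚ) ^ 2 / 4 := by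
  set m := (n - 1) / 2 with hm
  have hm2 : 2 * m ≥ n - 2 := by omega
  have hmn : 34 ≤ m := by omega
  -- key nat inequality : n * r < 4 * choose m (r-1)
  have hC : m.choose 2 ≤ m.choose (r - 1) := choose_ge_choose_two (by omega) (by omega)
  have hC2 : m.choose 2 = m * (m - 1) / 2 := Nat.choose_two_right m
  have key : n * r < 4 * m.choose (r - 1) := by
    have h1 : n * r ≤ (2 * m + 2) * (m - 2) := by
      apply Nat.mul_le_mul <;> omega
    have h2 : (2 * m + 2) * (m - 2) < 2 * (m * (m - 1)) := by
      zify [show 2 ≤ m by omega, show 1 ≤ m by omega]; nlinarith [hmn]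
    have hev : 2 ∣ m * (m - 1) := by
      rcases Nat.even_or_odd m with h | h
      · exact Dvd.dvd.mul_right h.two_dvd _
      · obtain ⟨k, hk⟩ := h
        exact Dvd.dvd.mul_left (by omega) _
    have h3 : 4 * m.choose 2 = 2 * (m * (m - 1)) := by
      rw [hC2]; omega
    omega
  have hr0 : (0:ℚ) < (r : ℚ) := by positivity
  have hn0 : (0:ℚ) < (n : ℚ) := by positivity
  rw [gt_iff_lt, div_mul_eq_mul_div, div_lt_div_iff₀ (by norm_num) hr0]
  have : ((n : ℚ)) * r < 4 * (m.choose (r - 1) : ℚ) := by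
    exact_mod_cast key
  have hCpos : (0:ℚ) < (m.choose (r-1) : ℚ) := by
    exact_mod_cast Nat.choose_pos (show r - 1 ≤ m by omega)
  nlinarith [this, hn0, hCpos]
end

section
/- Let n ≥ 70 and 5 ≤ r ≤ ⌊(n-1)/2⌋ - 2. Then C(⌊(n-1)/2⌋ - 1, r-1) + C(n, 2) ≤ C(⌊(n-1)/2⌋, r-1), where C denotes the binomial coefficient. -/
theorem aux_mono {n a b : ℕ} (hab : a ≤ b) (hb : b ≤ n / 2) :
    n.choose a ≤ n.choose b := by
  induction b with
  | zero => simp_all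
  | succ k ih =>
    rcases Nat.lt_or_ge a (k + 1) with h | h
    · exact (ih (Nat.lt_succ_iff.mp h) (by omega)).trans
        (Nat.choose_le_succ_of_lt_half_left (by omega))
    · have : a = k + 1 := le_antisymm hab h
      simp [this]

theorem aux_three {n k : ℕ} (h3 : 3 ≤ k) (hk : k + 3 ≤ n) :
    n.choose 3 ≤ n.choose k := by
  rcases le_or_gt k (n / 2) with h | h
  · exact aux_mono h3 h
  · rw [← Nat.choose_symm (show k ≤ n by omega)]
    exact aux_mono (by omega) (by omega)

theorem aux_23 {a : ℕ} (ha : 33 ≤ a) : (2 * a + 4).choose 2 ≤ a.choose 3 := by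
  obtain ⟨c, rfl⟩ : ∃ c, a = c + 33 := ⟨a - 33, by omega⟩
  have h2 : (2 * (c + 33) + 4).choose 2 = (c + 35) * (2 * c + 69) := by
    have hs : 2 * (c + 33) + 4 - 1 = 2 * c + 69 := by omega
    rw [Nat.choose_two_right, hs]
    have : (2 * (c + 33) + 4) * (2 * c + 69) = ((c + 35) * (2 * c + 69)) * 2 := by ring
    rw [this, Nat.mul_div_cancel _ (by norm_num)]
  have h3 : (c + 33).choose 3 = (c + 31) * ((c + 32) * ((c + 33) * 1)) / 6 := by
    rw [Nat.choose_eq_descFactorial_div_factorial]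
    congr 1
  rw [h2, h3, Nat.le_div_iff_mul_le (by norm_num)]
  nlinarith [c.zero_le]

theorem stmt_3 (n r : ℕ) (hn : 70 ≤ n) (hr5 : 5 ≤ r) (hr : r ≤ (n - 1) / 2 - 2) :
    ((n - 1) / 2 - 1).choose (r - 1) + n.choose 2 ≤ ((n - 1) / 2).choose (r - 1) := by
  obtain ⟨a, k, ha, hk⟩ : ∃ a k, (n - 1) / 2 = a + 1 ∧ r = k + 3 :=
    ⟨(n - 1) / 2 - 1, r - 3, by omega, by omega⟩
  rw [ha, hk]
  have ha33 : 33 ≤ a := by omega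
  have hka : k + 4 ≤ a := by omega
  have key : n.choose 2 ≤ a.choose (k + 1) := by
    calc n.choose 2 ≤ (2 * a + 4).choose 2 := Nat.choose_le_choose 2 (by omega)
    _ ≤ a.choose 3 := aux_23 ha33
    _ ≤ a.choose (k + 1) := aux_three (by omega) (by omega)
  have pascal : (a + 1).choose (k + 3 - 1) = a.choose (k + 1) + a.choose (k + 2) := by
    have : k + 3 - 1 = (k + 1) + 1 := by omega
    rw [this, Nat.choose_succ_succ]
  have hleft : (a + 1 - 1).choose (k + 3 - 1) = a.choose (k + 2) := by
    simp
  omega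
end

section
/- Let G be a simple graph on n ≥ 6 vertices with at least C(n,2) - 2 edges. Then G is hamiltonian-connected: for every pair of distinct vertices x, y, there exists a hamiltonian path in G from x to y. -/
open SimpleGraph

private def f46 : Fin 4 → Fin 6 := fun i => ⟨i.val + 2, by omega⟩

private abbrev ok2 (a b c d u v : Fin 6) : Prop := u ≠ v ∧
    ¬((u = a ∧ v = b) ∨ (u = b ∧ v = a) ∨ (u = c ∧ v = d) ∨ (u = d ∧ v = c))

set_option synthInstance.maxSize 4000 in
set_option synthInstance.maxHeartbeats 2000000 in
set_option maxHeartbeats 4000000 in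
private lemma core6 : ∀ a b c d : Fin 6, ∃ p0 p1 p2 p3 : Fin 4,
    [(0:Fin 6), f46 p0, f46 p1, f46 p2, f46 p3, 1].Nodup ∧
    ok2 a b c d 0 (f46 p0) ∧ ok2 a b c d (f46 p0) (f46 p1) ∧ ok2 a b c d (f46 p1) (f46 p2) ∧
    ok2 a b c d (f46 p2) (f46 p3) ∧ ok2 a b c d (f46 p3) 1 := by decide

private lemma walk_of_list {V : Type*} (G : SimpleGraph V) :
    ∀ (l : List V) (x y : V), l.Chain' G.Adj → l.head? = some x → l.getLast? = some y →
    ∃ p : G.Walk x y, p.support = l := by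
  intro l
  induction l with
  | nil => intro x y _ hh _; simp at hh
  | cons u t ih =>
    intro x y hc hh hl
    have hux : u = x := by simpa using hh
    subst hux
    cases t with
    | nil =>
      have huy : u = y := by simpa using hl
      subst huy
      exact ⟨SimpleGraph.Walk.nil, rfl⟩
    | cons w t' =>
      have hadj : G.Adj u w := (List.isChain_cons_cons.mp hc).1
      obtain ⟨q, hq⟩ := ih w y (List.isChain_cons_cons.mp hc).2 rfl
        (by rwa [List.getLast?_cons_cons] at hl)
      exact ⟨SimpleGraph.Walk.cons hadj q, by simp [hq]⟩

private lemma getLast?_map' {α β : Type*} (f : α → β) :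
    ∀ (l : List α), (l.map f).getLast? = l.getLast?.map f := by
  intro l
  induction l with
  | nil => rfl
  | cons a t ih =>
    cases t with
    | nil => rfl
    | cons b t' =>
      rw [List.map_cons, List.map_cons, List.getLast?_cons_cons, ← List.map_cons,
        List.getLast?_cons_cons]
      exact ih

universe u

private lemma main_ind : ∀ (n : ℕ) (V : Type u) [Fintype V] [DecidableEq V]
    (G : SimpleGraph V) [DecidableRel G.Adj], Fintype.card V = 6 + n →
    ∀ a b c d : V, (∀ u v : V, u ≠ v → ¬G.Adj u v → s(u,v) = s(a,b) ∨ s(u,v) = s(c,d)) →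
    ∀ x y : V, x ≠ y →
    ∃ l : List V, l.Nodup ∧ l.Chain' G.Adj ∧ l.head? = some x ∧ l.getLast? = some y ∧
      ∀ v : V, v ∈ l := by
  intro n
  induction n with
  | zero =>
    intro V _ _ G _ hcard a b c d hcov x y hxy
    have hcard6 : Fintype.card V = 6 := by omega
    let e : V ≃ Fin 6 := Fintype.equivFinOfCardEq hcard6
    have hxy6 : e x ≠ e y := fun h => hxy (e.injective h)
    let τ1 : Equiv.Perm (Fin 6) := Equiv.swap (e x) 0
    have hy1 : τ1 (e y) ≠ 0 := by
      intro h
      have h2 : τ1 (e y) = τ1 (e x) := by rw [h, Equiv.swap_apply_left]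
      exact hxy6 (τ1.injective h2).symm
    let τ2 : Equiv.Perm (Fin 6) := Equiv.swap (τ1 (e y)) 1
    let ε : V ≃ Fin 6 := e.trans (τ1.trans τ2)
    have hεx : ε x = 0 := by
      show τ2 (τ1 (e x)) = 0
      rw [show τ1 (e x) = 0 from Equiv.swap_apply_left _ _]
      exact Equiv.swap_apply_of_ne_of_ne (Ne.symm hy1) (by decide)
    have hεy : ε y = 1 := Equiv.swap_apply_left _ _
    obtain ⟨p0, p1, p2, p3, hnd, h01, h12, h23, h34, h45⟩ := core6 (ε a) (ε b) (ε c) (ε d)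
    have hchF : List.Chain' (fun u v => ok2 (ε a) (ε b) (ε c) (ε d) u v)
        [0, f46 p0, f46 p1, f46 p2, f46 p3, 1] :=
      List.isChain_cons_cons.mpr ⟨h01, List.isChain_cons_cons.mpr ⟨h12, List.isChain_cons_cons.mpr ⟨h23,
        List.isChain_cons_cons.mpr ⟨h34, List.isChain_cons_cons.mpr ⟨h45, List.isChain_singleton _⟩⟩⟩⟩⟩
    refine ⟨[(0:Fin 6), f46 p0, f46 p1, f46 p2, f46 p3, 1].map ε.symm,
      hnd.map ε.symm.injective, ?_, ?_, ?_, ?_⟩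
    · apply (List.isChain_map _).mpr
      refine hchF.imp ?_
      rintro u v ⟨hne, hnb⟩
      by_contra hna
      have hne' : ε.symm u ≠ ε.symm v := fun h => hne (ε.symm.injective h)
      have hss := hcov (ε.symm u) (ε.symm v) hne' hna
      apply hnb
      rcases hss with h | h
      · have h2 := congrArg (Sym2.map ε) h
        rw [Sym2.map_pair_eq, Sym2.map_pair_eq, Equiv.apply_symm_apply,
          Equiv.apply_symm_apply] at h2
        rcases Sym2.eq_iff.mp h2 with ⟨h3, h4⟩ | ⟨h3, h4⟩
        · exact Or.inl ⟨h3, h4⟩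
        · exact Or.inr (Or.inl ⟨h3, h4⟩)
      · have h2 := congrArg (Sym2.map ε) h
        rw [Sym2.map_pair_eq, Sym2.map_pair_eq, Equiv.apply_symm_apply,
          Equiv.apply_symm_apply] at h2
        rcases Sym2.eq_iff.mp h2 with ⟨h3, h4⟩ | ⟨h3, h4⟩
        · exact Or.inr (Or.inr (Or.inl ⟨h3, h4⟩))
        · exact Or.inr (Or.inr (Or.inr ⟨h3, h4⟩))
    · show some (ε.symm 0) = some x
      rw [(Equiv.symm_apply_eq ε).mpr hεx.symm]
    · show some (ε.symm 1) = some y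
      rw [(Equiv.symm_apply_eq ε).mpr hεy.symm]
    · intro v
      have hnd' := hnd.map ε.symm.injective
      have huniv : ([(0:Fin 6), f46 p0, f46 p1, f46 p2, f46 p3, 1].map ε.symm).toFinset
          = Finset.univ := by
        apply Finset.eq_univ_of_card
        rw [List.toFinset_card_of_nodup hnd', List.length_map, hcard6]
        rfl
      rw [← List.mem_toFinset, huniv]
      exact Finset.mem_univ v
  | succ n ih =>
    intro V _ _ G _ hcard a b c d hcov x y hxy
    obtain ⟨v, hv⟩ : ∃ v : V, v ∉ ({x, y, a, b, c, d} : Finset V) := by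
      by_contra h
      push_neg at h
      have hsub : (Finset.univ : Finset V) ⊆ {x, y, a, b, c, d} := fun z _ => h z
      have hc6 : ({x, y, a, b, c, d} : Finset V).card ≤ 6 := by
        have h1 := Finset.card_insert_le x ({y, a, b, c, d} : Finset V)
        have h2 := Finset.card_insert_le y ({a, b, c, d} : Finset V)
        have h3 := Finset.card_insert_le a ({b, c, d} : Finset V)
        have h4 := Finset.card_insert_le b ({c, d} : Finset V)
        have h5 := Finset.card_insert_le c ({d} : Finset V)
        have h6 : ({d} : Finset V).card = 1 := Finset.card_singleton d
        omega
      have h7 := Finset.card_le_card hsub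
      rw [Finset.card_univ, hcard] at h7
      omega
    simp only [Finset.mem_insert, Finset.mem_singleton, not_or] at hv
    obtain ⟨hvx, hvy, hva, hvb, hvc, hvd⟩ := hv
    let V' := {w : V // w ≠ v}
    let G' : SimpleGraph V' := G.comap (Subtype.val)
    haveI : DecidableRel G'.Adj := Classical.decRel _
    have hcard' : Fintype.card V' = 6 + n := by
      have h1 : Fintype.card V' = (Finset.univ.filter (fun w : V => w ≠ v)).card :=
        Fintype.card_subtype _
      rw [Finset.filter_ne', Finset.card_erase_of_mem (Finset.mem_univ v),
        Finset.card_univ, hcard] at h1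
      omega
    let a' : V' := ⟨a, Ne.symm hva⟩
    let b' : V' := ⟨b, Ne.symm hvb⟩
    let c' : V' := ⟨c, Ne.symm hvc⟩
    let d' : V' := ⟨d, Ne.symm hvd⟩
    let x' : V' := ⟨x, Ne.symm hvx⟩
    let y' : V' := ⟨y, Ne.symm hvy⟩
    have hcov' : ∀ u w : V', u ≠ w → ¬G'.Adj u w →
        s(u, w) = s(a', b') ∨ s(u, w) = s(c', d') := by
      intro u w hne hna
      have hne' : u.val ≠ w.val := fun h => hne (Subtype.ext h)
      rcases hcov u.val w.val hne' hna with h | h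
      · left
        apply Sym2.map.injective Subtype.val_injective
        rw [Sym2.map_pair_eq, Sym2.map_pair_eq]
        exact h
      · right
        apply Sym2.map.injective Subtype.val_injective
        rw [Sym2.map_pair_eq, Sym2.map_pair_eq]
        exact h
    have hxy' : x' ≠ y' := fun h => hxy (congrArg Subtype.val h)
    obtain ⟨l', hnd', hch', hh', hl', hall'⟩ := ih V' G' hcard' a' b' c' d' hcov' x' y' hxy'
    have hgood : ∀ w : V, v ≠ w → G.Adj v w := by
      intro w hw
      by_contra hna
      rcases hcov v w hw hna with h | h
      · rcases Sym2.eq_iff.mp h with ⟨h1, _⟩ | ⟨h1, _⟩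
        · exact hva h1
        · exact hvb h1
      · rcases Sym2.eq_iff.mp h with ⟨h1, _⟩ | ⟨h1, _⟩
        · exact hvc h1
        · exact hvd h1
    cases l' with
    | nil => simp at hh'
    | cons u0 t' =>
      have hu0 : u0 = x' := by simpa using hh'
      subst hu0
      have hmnd : (x :: t'.map Subtype.val).Nodup := hnd'.map Subtype.val_injective
      have hmch : (x :: t'.map Subtype.val).Chain' G.Adj := by
        have h2 : List.Chain' (fun p q : V' => G.Adj p.val q.val) (x' :: t') := hch'
        exact (List.isChain_map Subtype.val).mpr h2
      have hlast : (x :: t'.map Subtype.val).getLast? = some y := by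
        have h := getLast?_map' (Subtype.val) (x' :: t')
        rw [hl'] at h
        exact h
      have hvt : v ∉ t'.map Subtype.val := by
        intro hmem
        obtain ⟨w, _, hweq⟩ := List.mem_map.mp hmem
        exact w.2 hweq
      refine ⟨x :: v :: t'.map Subtype.val, ?_, ?_, rfl, ?_, ?_⟩
      · refine List.nodup_cons.mpr ⟨?_, List.nodup_cons.mpr ⟨hvt, (List.nodup_cons.mp hmnd).2⟩⟩
        intro hmem
        rcases List.mem_cons.mp hmem with h | h
        · exact hvx h.symm
        · exact (List.nodup_cons.mp hmnd).1 h
      · refine List.isChain_cons_cons.mpr ⟨(hgood x (Ne.symm (fun h => hvx h.symm))).symm, ?_⟩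
        cases htm : t'.map Subtype.val with
        | nil => exact List.isChain_singleton v
        | cons w0 tt =>
          refine List.isChain_cons_cons.mpr ⟨hgood w0 ?_, ?_⟩
          · intro h
            apply hvt
            rw [htm, ← h]
            exact List.mem_cons_self
          · have hmch2 : (x :: w0 :: tt).Chain' G.Adj := by rwa [htm] at hmch
            exact (List.isChain_cons_cons.mp hmch2).2
      · cases htm : t'.map Subtype.val with
        | nil =>
          exfalso
          rw [htm] at hlast
          exact hxy (by simpa using hlast)
        | cons w0 tt =>
          rw [htm] at hlast
          rw [List.getLast?_cons_cons, List.getLast?_cons_cons]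
          rwa [List.getLast?_cons_cons] at hlast
      · intro w
        by_cases hw : w = v
        · subst hw
          exact List.mem_cons_of_mem _ (List.mem_cons_self)
        · have hmem := hall' ⟨w, hw⟩
          rcases List.mem_cons.mp hmem with h | h
          · have : w = x := congrArg Subtype.val h
            rw [this]
            exact List.mem_cons_self
          · have : w ∈ t'.map Subtype.val := List.mem_map.mpr ⟨⟨w, hw⟩, h, rfl⟩
            exact List.mem_cons_of_mem _ (List.mem_cons_of_mem _ this)


theorem stmt_8 {V : Type*} [Fintype V] [DecidableEq V]
    (G : SimpleGraph V) [DecidableRel G.Adj]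
    (hn : 6 ≤ Fintype.card V)
    (he : (Fintype.card V).choose 2 - 2 ≤ G.edgeFinset.card) :
    ∀ x y : V, x ≠ y → ∃ p : G.Walk x y, p.IsHamiltonian := by
  intro x y hxy
  haveI : DecidableRel (Gᶜ.Adj) := fun u v => inferInstanceAs (Decidable (u ≠ v ∧ ¬ G.Adj u v))
  have hU : G.edgeFinset ∪ Gᶜ.edgeFinset = (⊤ : SimpleGraph V).edgeFinset := by
    ext e
    induction e using Sym2.ind with
    | _ u v =>
      simp only [Finset.mem_union, mem_edgeFinset, mem_edgeSet, compl_adj, top_adj]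
      constructor
      · rintro (h | h)
        · exact G.ne_of_adj h
        · exact h.1
      · intro h
        by_cases ha : G.Adj u v
        · exact Or.inl ha
        · exact Or.inr ⟨h, ha⟩
  have hD : Disjoint G.edgeFinset Gᶜ.edgeFinset := by
    rw [Finset.disjoint_left]
    intro e he1 he2
    induction e using Sym2.ind with
    | _ u v =>
      rw [mem_edgeFinset, mem_edgeSet] at he1 he2
      exact he2.2 he1
  have hcount : G.edgeFinset.card + Gᶜ.edgeFinset.card = (Fintype.card V).choose 2 := by
    rw [← Finset.card_union_of_disjoint hD, hU, card_edgeFinset_top_eq_card_choose_two]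
  have hchoose : (6 : ℕ).choose 2 ≤ (Fintype.card V).choose 2 := Nat.choose_le_choose 2 hn
  have h15 : (6 : ℕ).choose 2 = 15 := by decide
  have hcompl : Gᶜ.edgeFinset.card ≤ 2 := by omega
  obtain ⟨e1, e2, hsub⟩ : ∃ e1 e2 : Sym2 V, Gᶜ.edgeFinset ⊆ {e1, e2} := by
    rcases Nat.lt_or_ge Gᶜ.edgeFinset.card 1 with h | h
    · refine ⟨s(x, x), s(x, x), ?_⟩
      rw [Finset.card_eq_zero.mp (show Gᶜ.edgeFinset.card = 0 by omega)]
      exact Finset.empty_subset _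
    rcases Nat.lt_or_ge Gᶜ.edgeFinset.card 2 with h2 | h2
    · obtain ⟨e, hse⟩ := Finset.card_eq_one.mp (by omega : Gᶜ.edgeFinset.card = 1)
      exact ⟨e, e, by simp [hse]⟩
    · obtain ⟨e, f, _, hef⟩ := Finset.card_eq_two.mp (by omega : Gᶜ.edgeFinset.card = 2)
      exact ⟨e, f, by simp [hef]⟩
  obtain ⟨a, b, rfl⟩ := Sym2.ind (f := fun e => ∃ p q, e = s(p, q)) (fun p q => ⟨p, q, rfl⟩) e1
  obtain ⟨c, d, rfl⟩ := Sym2.ind (f := fun e => ∃ p q, e = s(p, q)) (fun p q => ⟨p, q, rfl⟩) e2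
  have hcov : ∀ u v : V, u ≠ v → ¬G.Adj u v → s(u, v) = s(a, b) ∨ s(u, v) = s(c, d) := by
    intro u v hne hna
    have hm : s(u, v) ∈ Gᶜ.edgeFinset := by
      rw [mem_edgeFinset, mem_edgeSet]
      exact ⟨hne, hna⟩
    simpa using hsub hm
  obtain ⟨l, hnd, hch, hh, hl, hall⟩ :=
    main_ind (Fintype.card V - 6) V G (by omega) a b c d hcov x y hxy
  obtain ⟨p, hp⟩ := walk_of_list G l x y hch hh hl
  exact ⟨p, fun v => by rw [hp]; exact List.count_eq_one_of_mem hnd (hall v)⟩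
end

section
/- Let 3 ≤ r ≤ ⌊(n-1)/2⌋ - 1 and let H_2 be the n-vertex r-uniform hypergraph with vertex set X ∪ Y, X and Y disjoint, |X| = ⌊(n-1)/2⌋, |Y| = ⌈(n+1)/2⌉, whose hyperedges are all r-subsets containing at most one vertex of Y. Then H_2 contains no Berge hamiltonian cycle (Berge cycle of length n). -/
def IsBergeCycle {V : Type*} (E : Finset (Finset V)) (ℓ : ℕ) : Prop :=
  ∃ (v : ZMod ℓ → V) (e : ZMod ℓ → Finset V),
    Function.Injective v ∧ Function.Injective e ∧
    ∀ i : ZMod ℓ, e i ∈ E ∧ v i ∈ e i ∧ v (i + 1) ∈ e i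

theorem stmt_13 {V : Type*} [Fintype V] [DecidableEq V]
    (n r : ℕ) (hn : n = Fintype.card V)
    (hr3 : 3 ≤ r) (hr : r ≤ (n - 1) / 2 - 1)
    (X Y : Finset V) (hdisj : Disjoint X Y) (hXY : X ∪ Y = Finset.univ)
    (hX : X.card = (n - 1) / 2) (hY : Y.card = (n + 2) / 2)
    (E : Finset (Finset V))
    (hE : E = (Finset.univ.powersetCard r).filter (fun e => (e ∩ Y).card ≤ 1)) :
    ¬ IsBergeCycle E n := by
  rintro ⟨v, e, hvinj, heinj, hprop⟩
  have hn9 : 9 ≤ n := by omega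
  haveI : NeZero n := ⟨by omega⟩
  -- S : indices mapped into Y
  set S : Finset (ZMod n) := Finset.univ.filter (fun i => v i ∈ Y) with hS
  -- v is bijective
  have hcard : Fintype.card (ZMod n) = Fintype.card V := by
    rw [ZMod.card]; exact hn
  have hvbij : Function.Bijective v :=
    (Fintype.bijective_iff_injective_and_card v).2 ⟨hvinj, hcard⟩
  -- |S| = |Y|
  have hSY : S.card = Y.card := by
    apply Finset.card_bij (fun i _ => v i)
    · intro i hi; exact (Finset.mem_filter.1 hi).2
    · intro i hi j hj h; exact hvinj h
    · intro y hy
      obtain ⟨i, rfl⟩ := hvbij.2 y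
      exact ⟨i, Finset.mem_filter.2 ⟨Finset.mem_univ i, hy⟩, rfl⟩
  -- no two consecutive indices in S
  have hcons : ∀ i ∈ S, i + 1 ∉ S := by
    intro i hi hi1
    have h1 : v i ∈ Y := (Finset.mem_filter.1 hi).2
    have h2 : v (i + 1) ∈ Y := (Finset.mem_filter.1 hi1).2
    obtain ⟨hEi, hv1, hv2⟩ := hprop i
    have hle : (e i ∩ Y).card ≤ 1 := by
      rw [hE] at hEi
      exact (Finset.mem_filter.1 hEi).2
    have hne : v i ≠ v (i + 1) := by
      intro h
      have h0 : i = i + 1 := hvinj h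
      haveI : Fact (1 < n) := ⟨by omega⟩
      have h1 : (0 : ZMod n) = 1 := by
        have := congrArg (fun x => x - i) h0
        simpa using this
      exact zero_ne_one h1
    have : 2 ≤ (e i ∩ Y).card := by
      apply Finset.one_lt_card.2
      exact ⟨v i, Finset.mem_inter.2 ⟨hv1, h1⟩, v (i + 1),
        Finset.mem_inter.2 ⟨hv2, h2⟩, hne⟩
    omega
  -- shift map S → Sᶜ injective
  have hle : S.card ≤ Sᶜ.card := by
    apply Finset.card_le_card_of_injOn (fun i => i + 1)
    · intro i hi
      simp only [Finset.mem_compl]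
      exact Finset.mem_coe.2 (Finset.mem_compl.2 (hcons i hi))
    · intro a _ b _ h
      exact add_right_cancel h
  have hScard : S.card + Sᶜ.card = n := by
    rw [Finset.card_add_card_compl, ZMod.card]
  rw [hSY, hY] at hle hScard
  omega
end
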